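/- For every k ≥ 1, the spider tree T_k has at least 2^k distinct [1,2]-sets of minimum cardinality k + 1; that is, the number of γ_{[1,2]}-sets of T_k is at least 2^k. -/

import Mathlib

open scoped Classical

/-- Boolean adjacency of the spider tree `T_k`: root `none`, and branch
vertices `some (i, 0) = a_i`, `some (i, 1) = b_i`, `some (i, 2) = c_i`,
with edges `r–a_i`, `a_i–b_i`, `b_i–c_i`. -/
def spiderAdj (k : ℕ) : Option (Fin k × Fin 3) → Option (Fin k × Fin 3) → Bool
  | none, some (_, j) => decide (j = 0)
  | some (_, j), none => decide (j = 0)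
  | some (i, j), some (i', j') =>
      decide (i = i') && (decide ((j : ℕ) + 1 = (j' : ℕ)) || decide ((j' : ℕ) + 1 = (j : ℕ)))
  | none, none => false

/-- The spider tree `T_k` on `3k+1` vertices. -/
def spider (k : ℕ) : SimpleGraph (Option (Fin k × Fin 3)) where
  Adj x y := spiderAdj k x y = true
  symm := by
    constructor
    rintro (_ | ⟨i, j⟩) (_ | ⟨i', j'⟩) h <;> simp [spiderAdj] at h ⊢
    · exact h
    · exact h
    · exact ⟨h.1.symm, h.2.symm⟩
  loopless := by
    constructor
    rintro (_ | ⟨i, j⟩) h <;> simp [spiderAdj] at h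

instance (k : ℕ) : DecidableRel (spider k).Adj :=
  fun x y => inferInstanceAs (Decidable (spiderAdj k x y = true))

/-- `S` is a `[1,2]`-set of `G`: every vertex outside `S` has at least one and
at most two neighbors in `S`. -/
def IsOneTwoSet {V : Type*} [Fintype V] [DecidableEq V] (G : SimpleGraph V)
    [DecidableRel G.Adj] (S : Finset V) : Prop :=
  ∀ v, v ∉ S → 1 ≤ (G.neighborFinset v ∩ S).card ∧ (G.neighborFinset v ∩ S).card ≤ 2

/-!
Every dominating set of `T_k`, in particular every `[1,2]`-set, meets each of the `k + 1`
disjoint blocks `{r, a_1, …, a_k}` and `{b_i, c_i}` (the leaf `c_i` can only be dominated by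
`b_i`, and `r` only by some `a_i`), so `γ_{[1,2]}(T_k) ≥ k + 1`. Conversely, the root together
with an arbitrary choice of `b_i` or `c_i` on each leg is a `[1,2]`-set of size `k + 1`: it
dominates, and every vertex other than `r` has degree at most two. These `2^k` choices give
distinct sets.
-/

open Finset

def IsDominatingSet {V : Type*} (G : SimpleGraph V) (S : Finset V) : Prop :=
  ∀ v ∉ S, ∃ w ∈ S, G.Adj v w

section Domination

variable {V : Type*} [Fintype V] [DecidableEq V] {G : SimpleGraph V} [DecidableRel G.Adj]

theorem IsOneTwoSet.isDominatingSet {S : Finset V} (hS : IsOneTwoSet G S) :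
    IsDominatingSet G S := by
  intro v hv
  obtain ⟨w, hw⟩ := card_pos.mp (hS v hv).1
  rw [mem_inter, SimpleGraph.mem_neighborFinset] at hw
  exact ⟨w, hw.2, hw.1⟩

theorem IsDominatingSet.isOneTwoSet {S : Finset V} (hS : IsDominatingSet G S)
    (hdeg : ∀ v ∉ S, G.degree v ≤ 2) : IsOneTwoSet G S := by
  intro v hv
  obtain ⟨w, hwS, hvw⟩ := hS v hv
  refine ⟨card_pos.mpr ⟨w, mem_inter.mpr ⟨(G.mem_neighborFinset v w).mpr hvw, hwS⟩⟩, ?_⟩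
  exact (card_le_card inter_subset_left).trans (hdeg v hv)

end Domination

namespace Spider

variable {k : ℕ}

theorem adj_iff {x y : Option (Fin k × Fin 3)} : (spider k).Adj x y ↔ spiderAdj k x y :=
  Iff.rfl

theorem adj_none_iff {w : Option (Fin k × Fin 3)} :
    (spider k).Adj none w ↔ ∃ i, w = some (i, 0) := by
  rcases w with _ | ⟨i, j⟩ <;> simp [adj_iff, spiderAdj, eq_comm]

theorem adj_some_two_iff {i : Fin k} {w : Option (Fin k × Fin 3)} :
    (spider k).Adj (some (i, 2)) w ↔ w = some (i, 1) := by
  rcases w with _ | ⟨i', j⟩ <;> simp [adj_iff, spiderAdj]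
  fin_cases j <;> simp [eq_comm]

theorem degree_some_le_two (i : Fin k) (j : Fin 3) : (spider k).degree (some (i, j)) ≤ 2 := by
  rw [← SimpleGraph.card_neighborFinset_eq_degree]
  refine (card_le_card fun w hw => ?_).trans
    (card_le_two (a := if j = 0 then none else some (i, j - 1)) (b := some (i, j + 1)))
  rw [SimpleGraph.mem_neighborFinset] at hw
  rcases w with _ | ⟨i', j'⟩
  · fin_cases j <;> simp_all [adj_iff, spiderAdj]
  · fin_cases j <;> fin_cases j' <;> simp_all [adj_iff, spiderAdj]

def block : Option (Fin k × Fin 3) → Option (Fin k)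
  | none => none
  | some (i, j) => if j = 0 then none else some i

theorem card_le_of_isDominatingSet {S : Finset (Option (Fin k × Fin 3))}
    (hS : IsDominatingSet (spider k) S) : k + 1 ≤ #S := by
  have hsurj : Set.SurjOn (block (k := k)) S Set.univ := by
    rintro (_ | i) -
    · by_cases hroot : none ∈ S
      · exact ⟨none, hroot, rfl⟩
      obtain ⟨w, hwS, hw⟩ := hS none hroot
      obtain ⟨i, rfl⟩ := adj_none_iff.mp hw
      exact ⟨_, hwS, rfl⟩
    · by_cases hleaf : some (i, 2) ∈ S
      · exact ⟨_, hleaf, rfl⟩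
      obtain ⟨w, hwS, hw⟩ := hS _ hleaf
      rw [adj_some_two_iff.mp hw] at hwS
      exact ⟨_, hwS, rfl⟩
  simpa using card_le_card_of_surjOn (t := univ) block (by simpa using hsurj)

def legChoiceSet (f : Fin k → Bool) : Finset (Option (Fin k × Fin 3)) :=
  insert none (univ.image fun i => some (i, if f i then 1 else 2))

theorem none_mem_legChoiceSet (f : Fin k → Bool) : none ∈ legChoiceSet f := mem_insert_self _ _

theorem some_mem_legChoiceSet_iff {f : Fin k → Bool} {i : Fin k} {j : Fin 3} :
    some (i, j) ∈ legChoiceSet f ↔ j = if f i then 1 else 2 := by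
  simp only [legChoiceSet, mem_insert, reduceCtorEq, mem_image, mem_univ, true_and,
    Option.some.injEq, Prod.mk.injEq, false_or]
  constructor
  · rintro ⟨_, rfl, rfl⟩
    rfl
  · rintro rfl
    exact ⟨i, rfl, rfl⟩

theorem card_legChoiceSet (f : Fin k → Bool) : #(legChoiceSet f) = k + 1 := by
  rw [legChoiceSet, card_insert_of_notMem (by simp),
    card_image_of_injective _ fun a b h => (Prod.mk.inj (Option.some.inj h)).1]
  simp

theorem legChoiceSet_injective : Function.Injective (legChoiceSet (k := k)) := by
  intro f g hfg
  funext i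
  have hi : (if f i then 1 else 2 : Fin 3) = if g i then 1 else 2 :=
    some_mem_legChoiceSet_iff.mp (hfg ▸ some_mem_legChoiceSet_iff.mpr rfl)
  revert hi
  cases f i <;> cases g i <;> decide

theorem isOneTwoSet_legChoiceSet (f : Fin k → Bool) :
    IsOneTwoSet (spider k) (legChoiceSet f) := by
  refine IsDominatingSet.isOneTwoSet ?_ ?_
  · rintro (_ | ⟨i, j⟩) hv
    · exact absurd (none_mem_legChoiceSet f) hv
    rw [some_mem_legChoiceSet_iff] at hv
    fin_cases j
    · exact ⟨none, none_mem_legChoiceSet f, by simp [adj_iff, spiderAdj]⟩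
    · have hfi : f i = false := by simpa using hv
      exact ⟨some (i, 2), some_mem_legChoiceSet_iff.mpr (by simp [hfi]),
        by simp [adj_iff, spiderAdj]⟩
    · have hfi : f i = true := by simpa using hv
      exact ⟨some (i, 1), some_mem_legChoiceSet_iff.mpr (by simp [hfi]),
        by simp [adj_iff, spiderAdj]⟩
  · rintro (_ | ⟨i, j⟩) hv
    · exact absurd (none_mem_legChoiceSet f) hv
    exact degree_some_le_two i j

end Spider

theorem spider_card_min_oneTwoSets_ge_general (k : ℕ) :
    2 ^ k ≤ (Finset.univ.filter
      (fun S : Finset (Option (Fin k × Fin 3)) =>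
        IsOneTwoSet (spider k) S ∧ S.card = k + 1 ∧
        ∀ S' : Finset (Option (Fin k × Fin 3)),
          IsOneTwoSet (spider k) S' → k + 1 ≤ S'.card)).card := by
  have hmin : ∀ S : Finset (Option (Fin k × Fin 3)), IsOneTwoSet (spider k) S → k + 1 ≤ #S :=
    fun S hS => Spider.card_le_of_isDominatingSet hS.isDominatingSet
  calc 2 ^ k = #(univ : Finset (Fin k → Bool)) := by simp
    _ ≤ _ := card_le_card_of_injOn Spider.legChoiceSet
      (fun f _ => by
        simpa using ⟨Spider.isOneTwoSet_legChoiceSet f, Spider.card_legChoiceSet f, hmin⟩)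
      Spider.legChoiceSet_injective.injOn

theorem spider_card_min_oneTwoSets_ge (k : ℕ) (hk : 1 ≤ k) :
    2 ^ k ≤ (Finset.univ.filter
      (fun S : Finset (Option (Fin k × Fin 3)) =>
        IsOneTwoSet (spider k) S ∧ S.card = k + 1 ∧
        ∀ S' : Finset (Option (Fin k × Fin 3)),
          IsOneTwoSet (spider k) S' → k + 1 ≤ S'.card)).card :=
  spider_card_min_oneTwoSets_ge_general k
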